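/- Let SL(2,ℂ) act on binary cubic forms ℂ[x,y]_3 by linear substitution, and consider the induced action on the projectivization of ℂ[x,y]_3. The stabilizer of the point [x³ + y³], i.e. the subgroup {g ∈ SL(2,ℂ) : (x³+y³)∘g = λ·(x³+y³) for some λ ∈ ℂ∖{0}}, is a group of order 12, isomorphic to the dicyclic group Dic₃ of order 12 (the binary dihedral group of the triangle; QuaternionGroup 3 in Mathlib). -/
import Mathlib
open MvPolynomial
noncomputable def slAct (g : Matrix.SpecialLinearGroup (Fin 2) ℂ)
    (f : MvPolynomial (Fin 2) ℂ) : MvPolynomial (Fin 2) ℂ :=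
  MvPolynomial.aeval
    (fun i => MvPolynomial.C ((g : Matrix (Fin 2) (Fin 2) ℂ) i 0) * MvPolynomial.X 0 +
      MvPolynomial.C ((g : Matrix (Fin 2) (Fin 2) ℂ) i 1) * MvPolynomial.X 1) f
noncomputable def cubicForm : MvPolynomial (Fin 2) ℂ := X 0 ^ 3 + X 1 ^ 3
namespace Stab19
noncomputable section
abbrev SL2 := Matrix.SpecialLinearGroup (Fin 2) ℂ

def zeta : ℂ := Complex.exp (2 * Real.pi * Complex.I / 6)
lemma hzeta : IsPrimitiveRoot zeta 6 := Complex.isPrimitiveRoot_exp 6 (by norm_num)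
lemma zeta6 : zeta ^ 6 = 1 := hzeta.pow_eq_one
lemma zeta_ne : zeta ≠ 0 := by
  intro h; have := zeta6; rw [h] at this; simp at this
lemma zeta3 : zeta ^ 3 = -1 := by
  have h2 : (zeta ^ 3) ^ 2 = 1 := by rw [← pow_mul]; exact zeta6
  have h3 : zeta ^ 3 ≠ 1 := hzeta.pow_ne_one_of_pos_of_lt (by norm_num) (by norm_num)
  have h : (zeta ^ 3 - 1) * (zeta ^ 3 + 1) = 0 := by linear_combination h2
  rcases mul_eq_zero.mp h with h | h
  · exact absurd (by linear_combination h) h3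
  · linear_combination h

def zp (i : ZMod 6) : ℂ := zeta ^ i.val
lemma zp_ne (i : ZMod 6) : zp i ≠ 0 := pow_ne_zero _ zeta_ne
lemma zeta_pow_mod (n : ℕ) : zeta ^ (n % 6) = zeta ^ n := by
  conv_rhs => rw [← Nat.mod_add_div n 6]
  rw [pow_add, pow_mul, zeta6, one_pow, mul_one]
lemma zp_natCast (n : ℕ) : zp (n : ZMod 6) = zeta ^ n := by
  rw [zp, ZMod.val_natCast, zeta_pow_mod]
lemma zp_add (i j : ZMod 6) : zp (i + j) = zp i * zp j := by
  rw [zp, zp, zp, ZMod.val_add, zeta_pow_mod, pow_add]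
lemma zp_zero : zp 0 = 1 := by rw [zp]; norm_num
lemma zp_neg_mul (i : ZMod 6) : zp (-i) * zp i = 1 := by
  rw [← zp_add, neg_add_cancel, zp_zero]
lemma zp_three : zp 3 = -1 := by
  have h : ((3:ℕ) : ZMod 6) = (3 : ZMod 6) := by norm_num
  rw [← h, zp_natCast, zeta3]
lemma zp_pow6 (i : ZMod 6) : zp i ^ 6 = 1 := by
  rw [zp, ← pow_mul, mul_comm, pow_mul, zeta6, one_pow]

def dm (z w : ℂ) (h : z * w = 1) : SL2 :=
  ⟨!![z, 0; 0, w], by rw [Matrix.det_fin_two_of]; simp [h]⟩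
def sm (z w : ℂ) (h : z * w = -1) : SL2 :=
  ⟨!![0, z; w, 0], by rw [Matrix.det_fin_two_of]; simp [h]⟩

lemma dm_congr {z w z' w' h h'} (h1 : z = z') (h2 : w = w') : dm z w h = dm z' w' h' := by
  subst h1; subst h2; rfl
lemma sm_congr {z w z' w' h h'} (h1 : z = z') (h2 : w = w') : sm z w h = sm z' w' h' := by
  subst h1; subst h2; rfl

lemma smI (i : ZMod 6) : (Complex.I * zp i) * (Complex.I * zp (-i)) = -1 := by
  have h := zp_neg_mul i
  have hI : Complex.I * Complex.I = -1 := Complex.I_mul_I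
  linear_combination Complex.I * Complex.I * h + hI

def phiFun : QuaternionGroup 3 → SL2
  | .a i => dm (zp (-i)) (zp i) (zp_neg_mul i)
  | .xa i => sm (Complex.I * zp i) (Complex.I * zp (-i)) (smI i)

lemma phiFun_a (i : ZMod (2*3)) : phiFun (.a i) = dm (zp (-i)) (zp i) (zp_neg_mul i) := rfl
lemma phiFun_xa (i : ZMod (2*3)) :
    phiFun (.xa i) = sm (Complex.I * zp i) (Complex.I * zp (-i)) (smI i) := rfl

lemma dm_mul_dm (z w z' w' : ℂ) (h : z*w=1) (h' : z'*w'=1) (hh : z * z' * (w * w') = 1) :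
    dm z w h * dm z' w' h' = dm (z * z') (w * w') hh := by
  apply Subtype.ext
  show (!![z,0;0,w] : Matrix (Fin 2) (Fin 2) ℂ) * !![z',0;0,w'] = _
  rw [Matrix.mul_fin_two]
  unfold dm
  congr 1 <;> ring

lemma dm_mul_sm (z w u v : ℂ) (h : z*w=1) (h' : u*v=-1) (hh : z * u * (w * v) = -1) :
    dm z w h * sm u v h' = sm (z * u) (w * v) hh := by
  apply Subtype.ext
  show (!![z,0;0,w] : Matrix (Fin 2) (Fin 2) ℂ) * !![0,u;v,0] = _
  rw [Matrix.mul_fin_two]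
  unfold sm
  congr 1 <;> ring

lemma sm_mul_dm (u v z w : ℂ) (h : u*v=-1) (h' : z*w=1) (hh : u * w * (v * z) = -1) :
    sm u v h * dm z w h' = sm (u * w) (v * z) hh := by
  apply Subtype.ext
  show (!![0,u;v,0] : Matrix (Fin 2) (Fin 2) ℂ) * !![z,0;0,w] = _
  rw [Matrix.mul_fin_two]
  unfold sm
  congr 1 <;> ring

lemma sm_mul_sm (u v u' v' : ℂ) (h : u*v=-1) (h' : u'*v'=-1) (hh : u * v' * (v * u') = 1) :
    sm u v h * sm u' v' h' = dm (u * v') (v * u') hh := by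
  apply Subtype.ext
  show (!![0,u;v,0] : Matrix (Fin 2) (Fin 2) ℂ) * !![0,u';v',0] = _
  rw [Matrix.mul_fin_two]
  unfold dm
  congr 1 <;> ring

lemma zp_smul_eq (p q : ZMod 6) : Complex.I * zp p * (Complex.I * zp q) = -(zp p * zp q) := by
  have := Complex.I_mul_I
  linear_combination zp p * zp q * this

def phi : QuaternionGroup 3 →* SL2 :=
  MonoidHom.mk' phiFun (by
    have hI := Complex.I_mul_I
    rintro (i | i) (j | j)
    · rw [QuaternionGroup.a_mul_a, phiFun_a, phiFun_a, phiFun_a,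
        dm_mul_dm _ _ _ _ _ _ (by
          rw [← zp_add, ← zp_add, show -i + -j = -(i+j) from by ring, zp_neg_mul])]
      exact dm_congr (by rw [← zp_add, neg_add]) (by rw [← zp_add])
    · rw [QuaternionGroup.a_mul_xa, phiFun_xa, phiFun_a, phiFun_xa,
        dm_mul_sm _ _ _ _ _ _ (by
          have h1 := zp_neg_mul i
          have h2 := zp_neg_mul j
          linear_combination (Complex.I*Complex.I*(zp (-j)*zp j))*h1
            + (Complex.I*Complex.I)*h2 + hI)]
      refine sm_congr ?_ ?_
      · rw [show j - i = j + -i from by ring, zp_add]; ring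
      · rw [show -(j - i) = -j + i from by ring, zp_add]; ring
    · rw [QuaternionGroup.xa_mul_a, phiFun_xa, phiFun_a, phiFun_xa,
        sm_mul_dm _ _ _ _ _ _ (by
          have h1 := zp_neg_mul i
          have h2 := zp_neg_mul j
          linear_combination (Complex.I*Complex.I*(zp (-j)*zp j))*h1
            + (Complex.I*Complex.I)*h2 + hI)]
      refine sm_congr ?_ ?_
      · rw [zp_add]; ring
      · rw [show -(i + j) = -i + -j from by ring, zp_add]; ring
    · have hc : (((3:ℕ) : ZMod 6)) = (3 : ZMod 6) := by decide
      have h6 : (6 : ZMod 6) = 0 := by decide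
      have key : ∀ p q : ZMod 6, zp (3 + p + q) = -(zp p * zp q) := by
        intro p q
        rw [zp_add, zp_add, zp_three]; ring
      rw [QuaternionGroup.xa_mul_xa, phiFun_xa, phiFun_xa, phiFun_a,
        sm_mul_sm _ _ _ _ _ _ (by
          have h1 := zp_neg_mul i
          have h2 := zp_neg_mul j
          linear_combination (Complex.I*Complex.I*Complex.I*Complex.I*(zp (-j)*zp j))*h1
            + (Complex.I*Complex.I*Complex.I*Complex.I)*h2
            + ((Complex.I*Complex.I - 1))*hI)]
      refine dm_congr ?_ ?_
      · rw [show -(((3:ℕ) : ZMod (2*3)) + j - i) = (3 : ZMod 6) + i + -j from by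
            rw [hc]; linear_combination -h6,
          key, zp_smul_eq]
      · rw [show (((3:ℕ) : ZMod (2*3)) + j - i) = (3 : ZMod 6) + -i + j from by
            rw [hc]; ring,
          key, zp_smul_eq])
lemma phi_injective : Function.Injective phi := by
  rw [injective_iff_map_eq_one]
  rintro (i | i) h
  · have h11 : zp i = 1 := by
      have := congrArg (fun g : SL2 => (g : Matrix (Fin 2) (Fin 2) ℂ) 1 1) h
      simpa [phi, phiFun, dm] using this
    have hdvd : (6 : ℕ) ∣ i.val := hzeta.dvd_of_pow_eq_one i.val h11
    have hv : i.val = 0 := Nat.eq_zero_of_dvd_of_lt hdvd i.val_lt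
    have hi : i = 0 := (ZMod.val_eq_zero i).mp hv
    rw [hi]
    rfl
  · have h00 : (0 : ℂ) = 1 := by
      have := congrArg (fun g : SL2 => (g : Matrix (Fin 2) (Fin 2) ℂ) 0 0) h
      simpa [phi, phiFun, sm] using this
    exact absurd h00 (by norm_num)

lemma slAct_explicit (g : SL2) : slAct g cubicForm =
    (C ((g : Matrix (Fin 2) (Fin 2) ℂ) 0 0) * X 0 + C ((g : Matrix (Fin 2) (Fin 2) ℂ) 0 1) * X 1)^3
      + (C ((g : Matrix (Fin 2) (Fin 2) ℂ) 1 0) * X 0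
          + C ((g : Matrix (Fin 2) (Fin 2) ℂ) 1 1) * X 1)^3 := by
  simp [slAct, cubicForm]

lemma slAct_dm (z w : ℂ) (h : z * w = 1) (hzw : z^3 = w^3) :
    slAct (dm z w h) cubicForm = (z^3) • cubicForm := by
  rw [slAct_explicit, smul_eq_C_mul]
  have e00 : ((dm z w h : SL2) : Matrix (Fin 2) (Fin 2) ℂ) 0 0 = z := rfl
  have e01 : ((dm z w h : SL2) : Matrix (Fin 2) (Fin 2) ℂ) 0 1 = 0 := rfl
  have e10 : ((dm z w h : SL2) : Matrix (Fin 2) (Fin 2) ℂ) 1 0 = 0 := rfl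
  have e11 : ((dm z w h : SL2) : Matrix (Fin 2) (Fin 2) ℂ) 1 1 = w := rfl
  rw [e00, e01, e10, e11, cubicForm]
  have hw : (C w : MvPolynomial (Fin 2) ℂ)^3 = C (z^3) := by rw [← C_pow, hzw]
  have hz : (C z : MvPolynomial (Fin 2) ℂ)^3 = C (z^3) := by rw [← C_pow]
  rw [map_zero]
  ring_nf
  rw [hw, hz]
  ring

lemma slAct_sm (z w : ℂ) (h : z * w = -1) (hzw : z^3 = w^3) :
    slAct (sm z w h) cubicForm = (z^3) • cubicForm := by
  rw [slAct_explicit, smul_eq_C_mul]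
  have e00 : ((sm z w h : SL2) : Matrix (Fin 2) (Fin 2) ℂ) 0 0 = 0 := rfl
  have e01 : ((sm z w h : SL2) : Matrix (Fin 2) (Fin 2) ℂ) 0 1 = z := rfl
  have e10 : ((sm z w h : SL2) : Matrix (Fin 2) (Fin 2) ℂ) 1 0 = w := rfl
  have e11 : ((sm z w h : SL2) : Matrix (Fin 2) (Fin 2) ℂ) 1 1 = 0 := rfl
  rw [e00, e01, e10, e11, cubicForm]
  have hw : (C w : MvPolynomial (Fin 2) ℂ)^3 = C (z^3) := by rw [← C_pow, hzw]
  have hz : (C z : MvPolynomial (Fin 2) ℂ)^3 = C (z^3) := by rw [← C_pow]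
  rw [map_zero]
  ring_nf
  rw [hw, hz]
  ring

lemma cube_eq {A B : ℂ} (h1 : A * B = 1) (h2 : A * A = 1) : A = B := by
  calc A = A * (A * B) := by rw [h1, mul_one]
  _ = (A * A) * B := by ring
  _ = B := by rw [h2, one_mul]

lemma cube_eq' {A B : ℂ} (h1 : A * B = -1) (h2 : A * A = -1) : A = B := by
  calc A = -(A * (A * B)) := by rw [h1]; ring
  _ = -((A * A) * B) := by ring
  _ = B := by rw [h2]; ring

lemma I_pow_six : Complex.I ^ 6 = -1 := by
  rw [show (6:ℕ) = 2*3 from rfl, pow_mul, Complex.I_sq]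
  norm_num

lemma phi_stab (x : QuaternionGroup 3) :
    ∃ lam : ℂ, lam ≠ 0 ∧ slAct (phi x) cubicForm = lam • cubicForm := by
  rcases x with i | i
  · refine ⟨(zp (-i))^3, pow_ne_zero _ (zp_ne _), ?_⟩
    have h1 : (zp (-i))^3 * (zp i)^3 = 1 := by
      rw [← mul_pow, zp_neg_mul, one_pow]
    have h2 : (zp (-i))^3 * (zp (-i))^3 = 1 := by
      rw [← pow_add]
      exact zp_pow6 _
    exact slAct_dm _ _ (zp_neg_mul i) (cube_eq h1 h2)
  · refine ⟨(Complex.I * zp i)^3, pow_ne_zero _ (mul_ne_zero Complex.I_ne_zero (zp_ne _)), ?_⟩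
    have h1 : (Complex.I * zp i)^3 * (Complex.I * zp (-i))^3 = -1 := by
      rw [← mul_pow, smI]
      norm_num
    have h2 : (Complex.I * zp i)^3 * (Complex.I * zp i)^3 = -1 := by
      rw [← pow_add, mul_pow, I_pow_six, zp_pow6]
      ring
    exact slAct_sm _ _ (smI i) (cube_eq' h1 h2)

lemma stab_mem' (g : SL2) (a b c d : ℂ)
    (hM : (g : Matrix (Fin 2) (Fin 2) ℂ) = !![a, b; c, d]) (lam : ℂ)
    (h : slAct g cubicForm = lam • cubicForm) :
    ∃ x : QuaternionGroup 3, phi x = g := by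
  have hdet : a * d - b * c = 1 := by
    have h2 := g.2
    rw [hM, Matrix.det_fin_two_of] at h2
    linear_combination h2
  have E : ∀ x y : ℂ, (a*x + b*y)^3 + (c*x + d*y)^3 = lam * (x^3 + y^3) := by
    intro x y
    have h2 := congrArg (MvPolynomial.eval ![x, y]) h
    rw [slAct_explicit, smul_eq_C_mul, cubicForm, hM] at h2
    simpa using h2
  have e1 : a^3 + c^3 = lam := by linear_combination E 1 0
  have e2 : b^3 + d^3 = lam := by linear_combination E 0 1
  have hP : a^2*b + c^2*d = 0 := by
    linear_combination (E 1 1 - E 1 (-1) - 2 * E 0 1)/6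
  have hQ : a*b^2 + c*d^2 = 0 := by
    linear_combination (E 1 1 + E 1 (-1) - 2 * E 1 0)/6
  by_cases hc : c = 0
  · -- diagonal case
    have had : a * d = 1 := by rw [hc] at hdet; linear_combination hdet
    have ha : a ≠ 0 := left_ne_zero_of_mul_eq_one had
    have hb : b = 0 := by
      have h0 : a^2 * b = 0 := by rw [hc] at hP; linear_combination hP
      exact (mul_eq_zero.mp h0).elim (fun h' => absurd h' (pow_ne_zero 2 ha)) id
    have ha6 : a ^ 6 = 1 := by
      have hd3 : d^3 = a^3 := by
        rw [hc] at e1; rw [hb] at e2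
        linear_combination e2 - e1
      have h2 : a^3 * d^3 = 1 := by linear_combination (a^2*d^2 + a*d + 1) * had
      rw [hd3] at h2
      linear_combination h2
    obtain ⟨k, -, hk⟩ := hzeta.eq_pow_of_pow_eq_one ha6
    refine ⟨.a (-((k : ℕ) : ZMod 6)), ?_⟩
    have hza : zp ((k : ℕ) : ZMod 6) = a := by rw [zp_natCast, hk]
    have hzd : zp (-((k : ℕ) : ZMod 6)) = d := by
      apply mul_left_cancel₀ ha
      rw [had, ← hza, mul_comm, zp_neg_mul]
    apply Subtype.ext
    show (!![zp (-(-((k : ℕ) : ZMod 6))), 0; 0, zp (-((k : ℕ) : ZMod 6))]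
        : Matrix (Fin 2) (Fin 2) ℂ) = (g : Matrix (Fin 2) (Fin 2) ℂ)
    rw [hM, neg_neg, hza, hzd, hb, hc]
  · -- c ≠ 0
    have ha : a = 0 := by
      by_contra ha
      have hab : a * b * (a * d - b * c) = 0 := by linear_combination d * hP - c * hQ
      rw [hdet, mul_one] at hab
      have hb : b = 0 := (mul_eq_zero.mp hab).elim (fun h' => absurd h' ha) id
      have hd : d = 0 := by
        have h0 : c^2 * d = 0 := by rw [hb] at hP; linear_combination hP
        exact (mul_eq_zero.mp h0).elim (fun h' => absurd h' (pow_ne_zero 2 hc)) id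
      rw [hb, hd] at hdet
      simp at hdet
    have hbc : b * c = -1 := by rw [ha] at hdet; linear_combination -hdet
    have hb : b ≠ 0 := by
      intro h0; rw [h0, zero_mul] at hbc; norm_num at hbc
    have hd : d = 0 := by
      have h0 : c^2 * d = 0 := by rw [ha] at hP; linear_combination hP
      exact (mul_eq_zero.mp h0).elim (fun h' => absurd h' (pow_ne_zero 2 hc)) id
    have hb6 : b ^ 6 = -1 := by
      have hc3 : c^3 = b^3 := by
        rw [ha] at e1; rw [hd] at e2
        linear_combination e1 - e2
      have h33 : b^3 * c^3 = -1 := by linear_combination (b^2*c^2 - b*c + 1) * hbc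
      rw [hc3] at h33
      linear_combination h33
    have hu6 : (-Complex.I * b) ^ 6 = 1 := by
      rw [mul_pow, show (-Complex.I)^6 = Complex.I^6 from by ring, I_pow_six, hb6]
      ring
    obtain ⟨k, -, hk⟩ := hzeta.eq_pow_of_pow_eq_one hu6
    refine ⟨.xa ((k : ℕ) : ZMod 6), ?_⟩
    have hzb : Complex.I * zp ((k : ℕ) : ZMod 6) = b := by
      rw [zp_natCast, hk]
      have hI := Complex.I_mul_I
      linear_combination -b * hI
    have hzc : Complex.I * zp (-((k : ℕ) : ZMod 6)) = c := by
      apply mul_left_cancel₀ hb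
      rw [hbc]
      linear_combination (smI ((k : ℕ) : ZMod 6))
        - (Complex.I * zp (-((k : ℕ) : ZMod 6))) * hzb
    apply Subtype.ext
    show (!![0, Complex.I * zp ((k : ℕ) : ZMod 6); Complex.I * zp (-((k : ℕ) : ZMod 6)), 0]
        : Matrix (Fin 2) (Fin 2) ℂ) = (g : Matrix (Fin 2) (Fin 2) ℂ)
    rw [hM, hzb, hzc, ha, hd]

lemma stab_mem (g : SL2) (lam : ℂ) (h : slAct g cubicForm = lam • cubicForm) :
    ∃ x : QuaternionGroup 3, phi x = g :=
  stab_mem' g _ _ _ _ (Matrix.eta_fin_two _) lam h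

end
end Stab19

/-- **Statement 19.** The stabilizer of the point `[x³ + y³]` of the projectivization of the
space of binary cubic forms, i.e. `{g ∈ SL(2,ℂ) : (x³+y³)∘g = λ·(x³+y³) for some λ ≠ 0}`, is a
group of order 12, isomorphic to the dicyclic group `Dic₃` of order 12 (`QuaternionGroup 3`). -/
theorem stabilizer_of_cubic_form :
    ∃ S : Subgroup (Matrix.SpecialLinearGroup (Fin 2) ℂ),
      (∀ g, g ∈ S ↔ ∃ lam : ℂ, lam ≠ 0 ∧ slAct g cubicForm = lam • cubicForm) ∧
      Nat.card S = 12 ∧ Nonempty (QuaternionGroup 3 ≃* S) := by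
  refine ⟨Stab19.phi.range, fun g => ⟨?_, ?_⟩, ?_, ⟨MonoidHom.ofInjective Stab19.phi_injective⟩⟩
  · rintro ⟨x, rfl⟩
    exact Stab19.phi_stab x
  · rintro ⟨lam, -, hl⟩
    exact Stab19.stab_mem g lam hl
  · rw [Nat.card_congr (MonoidHom.ofInjective Stab19.phi_injective).toEquiv.symm,
      Nat.card_eq_fintype_card, QuaternionGroup.card]
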